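/- PSL = CMP \ LF: a complete process in finite linear CCS fails to be lock-free if and only if it is potentially self-locking (it can reduce to a process of the form E[Q] where Q is deadlocked and top-complete). -/
import Mathlib


/-- Finite CCS processes: 0, input prefix a.P, output prefix ā.P, parallel. -/
inductive Proc : Type where
  | nil : Proc
  | inp : ℕ → Proc → Proc
  | out : ℕ → Proc → Proc
  | par : Proc → Proc → Proc

open Proc

/-- Structural equivalence: smallest congruence with unit, commutativity, associativity. -/
inductive StrEq : Proc → Proc → Prop where
  | refl (P) : StrEq P P
  | symm {P Q} : StrEq P Q → StrEq Q P
  | trans {P Q R} : StrEq P Q → StrEq Q R → StrEq P R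
  | nilPar (P) : StrEq (par P nil) P
  | comm (P Q) : StrEq (par P Q) (par Q P)
  | assoc (P Q R) : StrEq (par P (par Q R)) (par (par P Q) R)
  | congPar {P P' Q Q'} : StrEq P P' → StrEq Q Q' → StrEq (par P Q) (par P' Q')
  | congInp (a) {P P'} : StrEq P P' → StrEq (inp a P) (inp a P')
  | congOut (a) {P P'} : StrEq P P' → StrEq (out a P) (out a P')

/-- Reduction: a.P ‖ ā.Q → P ‖ Q, closed under parallel contexts and ≡. -/
inductive Red : Proc → Proc → Prop where
  | comm (a P Q) : Red (par (inp a P) (out a Q)) (par P Q)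
  | parL {P P'} (Q) : Red P P' → Red (par P Q) (par P' Q)
  | parR (P) {Q Q'} : Red Q Q' → Red (par P Q) (par P Q')
  | str {P P' Q Q'} : StrEq P P' → Red P' Q' → StrEq Q' Q → Red P Q

/-- Reflexive-transitive closure of reduction. -/
def Reds : Proc → Proc → Prop := Relation.ReflTransGen Red

/-- The set of names occurring in a process (ignoring polarity). -/
def names : Proc → Finset ℕ
  | nil => ∅
  | inp a P => insert a (names P)
  | out a P => insert a (names P)
  | par P Q => names P ∪ names Q

/-- Number of input occurrences of a name. -/
def inCount (a : ℕ) : Proc → ℕ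
  | nil => 0
  | inp b P => (if b = a then 1 else 0) + inCount a P
  | out _ P => inCount a P
  | par P Q => inCount a P + inCount a Q

/-- Number of output occurrences of a name. -/
def outCount (a : ℕ) : Proc → ℕ
  | nil => 0
  | inp _ P => outCount a P
  | out b P => (if b = a then 1 else 0) + outCount a P
  | par P Q => outCount a P + outCount a Q

/-- Linearity: each name occurs at most once as input and at most once as output. -/
def Linear (P : Proc) : Prop := ∀ a, inCount a P ≤ 1 ∧ outCount a P ≤ 1

/-- in(a,P): P ≡ P' ‖ a.P''. -/
def InPred (a : ℕ) (P : Proc) : Prop := ∃ P' P'', StrEq P (par P' (inp a P''))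

/-- out(a,P): P ≡ P' ‖ ā.P''. -/
def OutPred (a : ℕ) (P : Proc) : Prop := ∃ P' P'', StrEq P (par P' (out a P''))

/-- sync(a,P): both in(a,P) and out(a,P). -/
def SyncPred (a : ℕ) (P : Proc) : Prop := InPred a P ∧ OutPred a P

/-- wait(a,P): in(a,P) exclusive-or out(a,P). -/
def WaitPred (a : ℕ) (P : Proc) : Prop := Xor' (InPred a P) (OutPred a P)

/-- Process contexts C ::= [-] | P‖C | C‖P | α.C. -/
inductive Ctx : Type where
  | hole : Ctx
  | parL : Proc → Ctx → Ctx
  | parR : Ctx → Proc → Ctx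
  | inp : ℕ → Ctx → Ctx
  | out : ℕ → Ctx → Ctx

/-- Filling a process context. -/
def Ctx.fill : Ctx → Proc → Proc
  | .hole, Q => Q
  | .parL P C, Q => Proc.par P (C.fill Q)
  | .parR C P, Q => Proc.par (C.fill Q) P
  | .inp a C, Q => Proc.inp a (C.fill Q)
  | .out a C, Q => Proc.out a (C.fill Q)

/-- Evaluation contexts E ::= [-] | P‖E | E‖P. -/
inductive ECtx : Type where
  | hole : ECtx
  | parL : Proc → ECtx → ECtx
  | parR : ECtx → Proc → ECtx

/-- Filling an evaluation context. -/
def ECtx.fill : ECtx → Proc → Proc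
  | .hole, Q => Q
  | .parL P E, Q => Proc.par P (E.fill Q)
  | .parR E P, Q => Proc.par (E.fill Q) P

/-- cin(a,P): an input prefix on a occurs anywhere in P. -/
def CInPred (a : ℕ) (P : Proc) : Prop := ∃ (C : Ctx) (Q : Proc), StrEq P (C.fill Q) ∧ InPred a Q

/-- cout(a,P): an output prefix on a occurs anywhere in P. -/
def COutPred (a : ℕ) (P : Proc) : Prop := ∃ (C : Ctx) (Q : Proc), StrEq P (C.fill Q) ∧ OutPred a Q

/-- P is complete: ∀a. cin(a,P) ⟺ cout(a,P). -/
def Complete (P : Proc) : Prop := ∀ a, CInPred a P ↔ COutPred a P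

/-- P is top-complete. -/
def TopComplete (P : Proc) : Prop :=
  ∀ a, (InPred a P → COutPred a P) ∧ (OutPred a P → CInPred a P)

/-- dl(P): P has no reduction and P ≢ 0. -/
def Deadlock (P : Proc) : Prop := (¬ ∃ Q, Red P Q) ∧ ¬ StrEq P nil

/-- Lock-freedom. -/
def LockFree (P : Proc) : Prop :=
  ∀ Q a, Reds P Q → WaitPred a Q → ∃ R, Reds Q R ∧ SyncPred a R

/-! ### Auxiliary development -/

section PSLAux

open Proc

deriving instance DecidableEq for Proc

/-- `par nil P ≡ P`. -/
lemma nilParL (P : Proc) : StrEq (par nil P) P :=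
  (StrEq.comm _ _).trans (StrEq.nilPar P)

lemma streq_swap (T X Q : Proc) : StrEq (par (par T X) Q) (par (par T Q) X) :=
  ((StrEq.assoc T X Q).symm.trans
    (StrEq.congPar (StrEq.refl T) (StrEq.comm X Q))).trans (StrEq.assoc T Q X)

/-- Top-level action multiset. -/
def hd : Proc → Multiset (Bool × ℕ)
  | nil => 0
  | inp a _ => {(true, a)}
  | out a _ => {(false, a)}
  | par P Q => hd P + hd Q

lemma streq_hd {P Q : Proc} (h : StrEq P Q) : hd P = hd Q := by
  induction h with
  | refl => rfl
  | symm _ ih => exact ih.symm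
  | trans _ _ ih1 ih2 => exact ih1.trans ih2
  | nilPar P => simp [hd]
  | comm P Q => simp [hd, add_comm]
  | assoc P Q R => simp [hd, add_assoc]
  | congPar _ _ ih1 ih2 => simp [hd, ih1, ih2]
  | congInp a _ _ => simp [hd]
  | congOut a _ _ => simp [hd]

lemma streq_inCount {P Q : Proc} (h : StrEq P Q) (a : ℕ) : inCount a P = inCount a Q := by
  induction h with
  | refl => rfl
  | symm _ ih => exact ih.symm
  | trans _ _ ih1 ih2 => exact ih1.trans ih2
  | nilPar P => simp [inCount]
  | comm P Q => simp [inCount]; omega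
  | assoc P Q R => simp [inCount]; omega
  | congPar _ _ ih1 ih2 => simp [inCount, ih1, ih2]
  | congInp b _ ih => simp [inCount, ih]
  | congOut b _ ih => simp [inCount, ih]

lemma streq_outCount {P Q : Proc} (h : StrEq P Q) (a : ℕ) : outCount a P = outCount a Q := by
  induction h with
  | refl => rfl
  | symm _ ih => exact ih.symm
  | trans _ _ ih1 ih2 => exact ih1.trans ih2
  | nilPar P => simp [outCount]
  | comm P Q => simp [outCount]; omega
  | assoc P Q R => simp [outCount]; omega
  | congPar _ _ ih1 ih2 => simp [outCount, ih1, ih2]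
  | congInp b _ ih => simp [outCount, ih]
  | congOut b _ ih => simp [outCount, ih]

/-- Number of prefixes. -/
def psize : Proc → ℕ
  | nil => 0
  | inp _ P => psize P + 1
  | out _ P => psize P + 1
  | par P Q => psize P + psize Q

lemma streq_psize {P Q : Proc} (h : StrEq P Q) : psize P = psize Q := by
  induction h with
  | refl => rfl
  | symm _ ih => exact ih.symm
  | trans _ _ ih1 ih2 => exact ih1.trans ih2
  | nilPar P => simp [psize]
  | comm P Q => simp [psize]; omega
  | assoc P Q R => simp [psize]; omega
  | congPar _ _ ih1 ih2 => simp [psize, ih1, ih2]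
  | congInp b _ ih => simp [psize, ih]
  | congOut b _ ih => simp [psize, ih]

/-- Canonical multiset of (recursively normalized) top-level threads. -/
noncomputable def ntop : Proc → Multiset Proc
  | nil => 0
  | inp a P => {inp a ((ntop P).toList.foldr par nil)}
  | out a P => {out a ((ntop P).toList.foldr par nil)}
  | par P Q => ntop P + ntop Q

/-- Canonical normal form. -/
noncomputable def pnorm (P : Proc) : Proc := (ntop P).toList.foldr par nil

@[simp] lemma ntop_nil : ntop nil = 0 := rfl
@[simp] lemma ntop_inp (a P) : ntop (inp a P) = {inp a (pnorm P)} := rfl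
@[simp] lemma ntop_out (a P) : ntop (out a P) = {out a (pnorm P)} := rfl
@[simp] lemma ntop_par (P Q) : ntop (par P Q) = ntop P + ntop Q := rfl

lemma streq_ntop {P Q : Proc} (h : StrEq P Q) : ntop P = ntop Q := by
  induction h with
  | refl => rfl
  | symm _ ih => exact ih.symm
  | trans _ _ ih1 ih2 => exact ih1.trans ih2
  | nilPar P => simp
  | comm P Q => simp [add_comm]
  | assoc P Q R => simp [add_assoc]
  | congPar _ _ ih1 ih2 => simp [ih1, ih2]
  | congInp b _ ih => simp [pnorm, ih]
  | congOut b _ ih => simp [pnorm, ih]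

lemma foldr_perm {l1 l2 : List Proc} (h : l1.Perm l2) :
    StrEq (l1.foldr par nil) (l2.foldr par nil) := by
  induction h with
  | nil => exact StrEq.refl _
  | cons x _ ih => exact StrEq.congPar (StrEq.refl x) ih
  | swap x y l =>
      exact ((StrEq.assoc y x _).trans
        (StrEq.congPar (StrEq.comm y x) (StrEq.refl _))).trans (StrEq.assoc x y _).symm
  | trans _ _ ih1 ih2 => exact ih1.trans ih2

lemma foldr_append (l1 l2 : List Proc) :
    StrEq ((l1 ++ l2).foldr par nil) (par (l1.foldr par nil) (l2.foldr par nil)) := by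
  induction l1 with
  | nil => exact (nilParL _).symm
  | cons x t ih => exact (StrEq.congPar (StrEq.refl x) ih).trans (StrEq.assoc x _ _)

lemma exists_list (P : Proc) :
    ∃ l : List Proc, (↑l : Multiset Proc) = ntop P ∧ StrEq P (l.foldr par nil) := by
  induction P with
  | nil => exact ⟨[], rfl, StrEq.refl _⟩
  | inp a P ih =>
      obtain ⟨l, hl, hs⟩ := ih
      have hperm : l.Perm (ntop P).toList :=
        Multiset.coe_eq_coe.mp (by rw [hl, Multiset.coe_toList])
      have h1 : StrEq P (pnorm P) := hs.trans (foldr_perm hperm)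
      exact ⟨[inp a (pnorm P)], by simp, (StrEq.congInp a h1).trans (StrEq.nilPar _).symm⟩
  | out a P ih =>
      obtain ⟨l, hl, hs⟩ := ih
      have hperm : l.Perm (ntop P).toList :=
        Multiset.coe_eq_coe.mp (by rw [hl, Multiset.coe_toList])
      have h1 : StrEq P (pnorm P) := hs.trans (foldr_perm hperm)
      exact ⟨[out a (pnorm P)], by simp, (StrEq.congOut a h1).trans (StrEq.nilPar _).symm⟩
  | par P Q ihP ihQ =>
      obtain ⟨l1, h1, s1⟩ := ihP
      obtain ⟨l2, h2, s2⟩ := ihQ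
      exact ⟨l1 ++ l2, by rw [ntop_par, ← h1, ← h2]; exact Multiset.coe_add l1 l2,
        (StrEq.congPar s1 s2).trans (foldr_append l1 l2).symm⟩

lemma streq_norm (P : Proc) : StrEq P (pnorm P) := by
  obtain ⟨l, hl, hs⟩ := exists_list P
  have hperm : l.Perm (ntop P).toList :=
    Multiset.coe_eq_coe.mp (by rw [hl, Multiset.coe_toList])
  exact hs.trans (foldr_perm hperm)

lemma ntop_norm (P : Proc) : ntop (pnorm P) = ntop P := (streq_ntop (streq_norm P)).symm

lemma norm_idem (P : Proc) : pnorm (pnorm P) = pnorm P :=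
  congrArg (fun m : Multiset Proc => m.toList.foldr par nil) (ntop_norm P)

lemma streq_of_ntop {P Q : Proc} (h : ntop P = ntop Q) : StrEq P Q := by
  have hn : StrEq (pnorm P) Q := by
    have : pnorm P = pnorm Q := by unfold pnorm; rw [h]
    rw [this]; exact (streq_norm Q).symm
  exact (streq_norm P).trans hn

lemma mem_ntop {X P : Proc} (h : X ∈ ntop P) :
    ntop X = {X} ∧ ((∃ c Y, X = inp c Y) ∨ (∃ c Y, X = out c Y)) := by
  induction P with
  | nil => simp at h
  | inp a P ih =>
      rw [ntop_inp, Multiset.mem_singleton] at h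
      subst h
      exact ⟨by simp [norm_idem], Or.inl ⟨a, pnorm P, rfl⟩⟩
  | out a P ih =>
      rw [ntop_out, Multiset.mem_singleton] at h
      subst h
      exact ⟨by simp [norm_idem], Or.inr ⟨a, pnorm P, rfl⟩⟩
  | par P Q ihP ihQ =>
      rw [ntop_par, Multiset.mem_add] at h
      rcases h with h | h
      · exact ihP h
      · exact ihQ h

lemma ntop_foldr (l : List Proc) : ntop (l.foldr par nil) = (l.map ntop).sum := by
  induction l with
  | nil => rfl
  | cons x t ih => simp [ih]

lemma sum_singletons (l : List Proc) :
    (l.map (fun Y => ({Y} : Multiset Proc))).sum = ↑l := by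
  induction l with
  | nil => rfl
  | cons x t ih => simp [ih]

lemma foldr_ntop_eq {m : Multiset Proc} (hall : ∀ Y ∈ m, ntop Y = {Y}) :
    ntop (m.toList.foldr par nil) = m := by
  rw [ntop_foldr]
  have h1 : m.toList.map ntop = m.toList.map (fun Y => ({Y} : Multiset Proc)) :=
    List.map_congr_left (fun Y hY => hall Y (by rwa [Multiset.mem_toList] at hY))
  rw [h1, sum_singletons, Multiset.coe_toList]

lemma streq_extract {P X : Proc} (h : X ∈ ntop P) :
    ∃ W, StrEq P (par W X) ∧ ntop W = (ntop P).erase X := by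
  refine ⟨((ntop P).erase X).toList.foldr par nil, ?_, ?_⟩
  · apply streq_of_ntop
    have hW : ntop (((ntop P).erase X).toList.foldr par nil) = (ntop P).erase X :=
      foldr_ntop_eq (fun Y hY => (mem_ntop (Multiset.mem_of_mem_erase hY)).1)
    rw [ntop_par, hW, (mem_ntop h).1]
    rw [add_comm, Multiset.singleton_add, Multiset.cons_erase h]
  · exact foldr_ntop_eq (fun Y hY => (mem_ntop (Multiset.mem_of_mem_erase hY)).1)

/-- head of a thread. -/
def hdOf : Proc → Bool × ℕ
  | inp a _ => (true, a)
  | out a _ => (false, a)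
  | _ => (true, 0)

lemma hd_eq_map (P : Proc) : hd P = (ntop P).map hdOf := by
  induction P with
  | nil => rfl
  | inp a P ih => simp [hd, hdOf]
  | out a P ih => simp [hd, hdOf]
  | par P Q ihP ihQ => simp [hd, ihP, ihQ]

lemma inPred_iff {a : ℕ} {P : Proc} : InPred a P ↔ (true, a) ∈ hd P := by
  constructor
  · rintro ⟨P', P'', h⟩
    rw [streq_hd h]; simp [hd]
  · intro h
    rw [hd_eq_map] at h
    obtain ⟨X, hX, hXh⟩ := Multiset.mem_map.mp h
    obtain ⟨-, hsh⟩ := mem_ntop hX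
    rcases hsh with ⟨c, Y, rfl⟩ | ⟨c, Y, rfl⟩
    · have hca : c = a := by simpa [hdOf] using hXh
      subst hca
      obtain ⟨W, hW, -⟩ := streq_extract hX
      exact ⟨W, Y, hW⟩
    · simp [hdOf] at hXh

lemma outPred_iff {a : ℕ} {P : Proc} : OutPred a P ↔ (false, a) ∈ hd P := by
  constructor
  · rintro ⟨P', P'', h⟩
    rw [streq_hd h]; simp [hd]
  · intro h
    rw [hd_eq_map] at h
    obtain ⟨X, hX, hXh⟩ := Multiset.mem_map.mp h
    obtain ⟨-, hsh⟩ := mem_ntop hX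
    rcases hsh with ⟨c, Y, rfl⟩ | ⟨c, Y, rfl⟩
    · simp [hdOf] at hXh
    · have hca : c = a := by simpa [hdOf] using hXh
      subst hca
      obtain ⟨W, hW, -⟩ := streq_extract hX
      exact ⟨W, Y, hW⟩

lemma sync_red {a : ℕ} {P : Proc} (h1 : (true, a) ∈ hd P) (h2 : (false, a) ∈ hd P) :
    ∃ R, Red P R := by
  rw [hd_eq_map] at h1
  obtain ⟨X, hX, hXh⟩ := Multiset.mem_map.mp h1
  obtain ⟨-, hsh⟩ := mem_ntop hX
  rcases hsh with ⟨c, Y, rfl⟩ | ⟨c, Y, rfl⟩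
  swap
  · simp [hdOf] at hXh
  have hca : a = c := by simpa [hdOf] using hXh.symm
  subst hca
  obtain ⟨W, hW, -⟩ := streq_extract hX
  have h2W : (false, a) ∈ hd W := by
    have := streq_hd hW
    rw [this] at h2
    simp only [hd, Multiset.mem_add, Multiset.mem_singleton] at h2
    rcases h2 with h2 | h2
    · exact h2
    · exact absurd h2 (by simp)
  obtain ⟨W', Y', hW'⟩ := outPred_iff.mpr h2W
  have hchain : StrEq P (par W' (par (inp a Y) (out a Y'))) :=
    ((hW.trans (StrEq.congPar hW' (StrEq.refl _))).trans
      (streq_swap W' (out a Y') (inp a Y))).trans (StrEq.assoc W' (inp a Y) (out a Y')).symm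
  exact ⟨par W' (par Y Y'), Red.str hchain (Red.parR W' (Red.comm a Y Y')) (StrEq.refl _)⟩

lemma red_inv {S S' : Proc} (h : Red S S') :
    ∃ b T P1 P2, StrEq S (par T (par (inp b P1) (out b P2))) ∧ StrEq S' (par T (par P1 P2)) := by
  induction h with
  | comm a P Q => exact ⟨a, nil, P, Q, (nilParL _).symm, (nilParL _).symm⟩
  | parL Q h ih =>
      obtain ⟨b, T, P1, P2, h1, h2⟩ := ih
      exact ⟨b, par T Q, P1, P2,
        (StrEq.congPar h1 (StrEq.refl Q)).trans (streq_swap T _ Q),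
        (StrEq.congPar h2 (StrEq.refl Q)).trans (streq_swap T _ Q)⟩
  | parR P h ih =>
      obtain ⟨b, T, P1, P2, h1, h2⟩ := ih
      exact ⟨b, par P T, P1, P2,
        (StrEq.congPar (StrEq.refl P) h1).trans (StrEq.assoc P T _),
        (StrEq.congPar (StrEq.refl P) h2).trans (StrEq.assoc P T _)⟩
  | str e1 _ e2 ih =>
      obtain ⟨b, T, P1, P2, h1, h2⟩ := ih
      exact ⟨b, T, P1, P2, e1.trans h1, e2.symm.trans h2⟩

lemma red_counts {S S' : Proc} (h : Red S S') :
    ∃ b, ∀ a, inCount a S = inCount a S' + (if b = a then 1 else 0) ∧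
              outCount a S = outCount a S' + (if b = a then 1 else 0) := by
  obtain ⟨b, T, P1, P2, h1, h2⟩ := red_inv h
  refine ⟨b, ?_⟩
  intro a
  have e1 := streq_inCount h1 a
  have e2 := streq_inCount h2 a
  have f1 := streq_outCount h1 a
  have f2 := streq_outCount h2 a
  by_cases hba : b = a <;>
    simp [inCount, outCount, hba] at e1 e2 f1 f2 <;> simp [hba] <;> omega

lemma red_psize {S S' : Proc} (h : Red S S') : psize S' < psize S := by
  obtain ⟨b, T, P1, P2, h1, h2⟩ := red_inv h
  have e1 := streq_psize h1
  have e2 := streq_psize h2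
  simp [psize] at e1 e2
  omega

lemma red_hd {S S' : Proc} (h : Red S S') (pol : Bool) (a : ℕ) (hm : (pol, a) ∈ hd S) :
    ((true, a) ∈ hd S ∧ (false, a) ∈ hd S) ∨ (pol, a) ∈ hd S' := by
  obtain ⟨b, T, P1, P2, h1, h2⟩ := red_inv h
  rw [streq_hd h1] at hm
  rw [streq_hd h1, streq_hd h2]
  simp only [hd, Multiset.mem_add, Multiset.mem_singleton] at hm
  rcases hm with hm | hm | hm
  · right
    simp only [hd, Multiset.mem_add]
    exact Or.inl hm
  · left
    have hab : a = b := by simpa using congrArg Prod.snd hm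
    subst hab
    constructor <;> simp [hd]
  · left
    have hab : a = b := by simpa using congrArg Prod.snd hm
    subst hab
    constructor <;> simp [hd]

/-- Combined linearity + completeness invariant. -/
def Good (P : Proc) : Prop :=
  ∀ a, inCount a P ≤ 1 ∧ outCount a P ≤ 1 ∧ (0 < inCount a P ↔ 0 < outCount a P)

lemma good_red {S S' : Proc} (h : Red S S') (hg : Good S) : Good S' := by
  obtain ⟨b, hb⟩ := red_counts h
  intro a
  obtain ⟨e1, e2⟩ := hb a
  obtain ⟨g1, g2, g3⟩ := hg a
  by_cases hba : b = a <;> simp [hba] at e1 e2 <;> omega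

lemma good_reds {S S' : Proc} (h : Reds S S') (hg : Good S) : Good S' := by
  induction h with
  | refl => exact hg
  | tail _ h2 ih => exact good_red h2 ih

lemma inPred_pos {a : ℕ} {P : Proc} (h : InPred a P) : 0 < inCount a P := by
  obtain ⟨P', P'', hs⟩ := h
  rw [streq_inCount hs a]
  simp [inCount]

lemma outPred_pos {a : ℕ} {P : Proc} (h : OutPred a P) : 0 < outCount a P := by
  obtain ⟨P', P'', hs⟩ := h
  rw [streq_outCount hs a]
  simp [outCount]

lemma inCount_fill_ge (a : ℕ) (C : Ctx) (Q : Proc) :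
    inCount a Q ≤ inCount a (C.fill Q) := by
  induction C with
  | hole => exact le_rfl
  | parL P C ih => simp only [Ctx.fill, inCount]; omega
  | parR C P ih => simp only [Ctx.fill, inCount]; omega
  | inp b C ih => simp only [Ctx.fill, inCount]; omega
  | out b C ih => simp only [Ctx.fill, inCount]; omega

lemma outCount_fill_ge (a : ℕ) (C : Ctx) (Q : Proc) :
    outCount a Q ≤ outCount a (C.fill Q) := by
  induction C with
  | hole => exact le_rfl
  | parL P C ih => simp only [Ctx.fill, outCount]; omega
  | parR C P ih => simp only [Ctx.fill, outCount]; omega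
  | inp b C ih => simp only [Ctx.fill, outCount]; omega
  | out b C ih => simp only [Ctx.fill, outCount]; omega

lemma cin_of_pos {a : ℕ} : ∀ {P : Proc}, 0 < inCount a P → CInPred a P := by
  intro P
  induction P with
  | nil => intro h; simp [inCount] at h
  | inp b P ih =>
      intro h
      by_cases hba : b = a
      · subst hba
        exact ⟨Ctx.hole, inp b P, StrEq.refl _, nil, P, (nilParL _).symm⟩
      · simp [inCount, hba] at h
        obtain ⟨C, Q, h1, h2⟩ := ih h
        exact ⟨Ctx.inp b C, Q, StrEq.congInp b h1, h2⟩
  | out b P ih =>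
      intro h
      simp only [inCount] at h
      obtain ⟨C, Q, h1, h2⟩ := ih h
      exact ⟨Ctx.out b C, Q, StrEq.congOut b h1, h2⟩
  | par P1 P2 ih1 ih2 =>
      intro h
      simp only [inCount] at h
      by_cases h1 : 0 < inCount a P1
      · obtain ⟨C, Q, hc, hi⟩ := ih1 h1
        exact ⟨Ctx.parR C P2, Q, StrEq.congPar hc (StrEq.refl _), hi⟩
      · obtain ⟨C, Q, hc, hi⟩ := ih2 (by omega)
        exact ⟨Ctx.parL P1 C, Q, StrEq.congPar (StrEq.refl _) hc, hi⟩

lemma cout_of_pos {a : ℕ} : ∀ {P : Proc}, 0 < outCount a P → COutPred a P := by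
  intro P
  induction P with
  | nil => intro h; simp [outCount] at h
  | out b P ih =>
      intro h
      by_cases hba : b = a
      · subst hba
        exact ⟨Ctx.hole, out b P, StrEq.refl _, nil, P, (nilParL _).symm⟩
      · simp [outCount, hba] at h
        obtain ⟨C, Q, h1, h2⟩ := ih h
        exact ⟨Ctx.out b C, Q, StrEq.congOut b h1, h2⟩
  | inp b P ih =>
      intro h
      simp only [outCount] at h
      obtain ⟨C, Q, h1, h2⟩ := ih h
      exact ⟨Ctx.inp b C, Q, StrEq.congInp b h1, h2⟩
  | par P1 P2 ih1 ih2 =>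
      intro h
      simp only [outCount] at h
      by_cases h1 : 0 < outCount a P1
      · obtain ⟨C, Q, hc, hi⟩ := ih1 h1
        exact ⟨Ctx.parR C P2, Q, StrEq.congPar hc (StrEq.refl _), hi⟩
      · obtain ⟨C, Q, hc, hi⟩ := ih2 (by omega)
        exact ⟨Ctx.parL P1 C, Q, StrEq.congPar (StrEq.refl _) hc, hi⟩

lemma cin_iff {a : ℕ} {P : Proc} : CInPred a P ↔ 0 < inCount a P := by
  constructor
  · rintro ⟨C, Q, h1, hin⟩
    rw [streq_inCount h1 a]
    exact lt_of_lt_of_le (inPred_pos hin) (inCount_fill_ge a C Q)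
  · exact cin_of_pos

lemma cout_iff {a : ℕ} {P : Proc} : COutPred a P ↔ 0 < outCount a P := by
  constructor
  · rintro ⟨C, Q, h1, hout⟩
    rw [streq_outCount h1 a]
    exact lt_of_lt_of_le (outPred_pos hout) (outCount_fill_ge a C Q)
  · exact cout_of_pos

lemma good_topComplete {P : Proc} (hg : Good P) : TopComplete P := by
  intro a
  obtain ⟨g1, g2, g3⟩ := hg a
  constructor
  · intro hin
    exact cout_of_pos (g3.mp (inPred_pos hin))
  · intro hout
    exact cin_of_pos (g3.mpr (outPred_pos hout))

lemma hd_zero {P : Proc} (h : hd P = 0) : StrEq P nil := by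
  induction P with
  | nil => exact StrEq.refl _
  | inp a P ih => simp [hd] at h
  | out a P ih => simp [hd] at h
  | par P Q ih1 ih2 =>
      rw [hd, add_eq_zero] at h
      exact (StrEq.congPar (ih1 h.1) (ih2 h.2)).trans (StrEq.nilPar nil)

lemma inCount_ntop (a : ℕ) (P : Proc) :
    inCount a P = ((ntop P).map (inCount a)).sum := by
  induction P with
  | nil => rfl
  | inp b P ih =>
      simp only [ntop_inp, Multiset.map_singleton, Multiset.sum_singleton, inCount]
      rw [← streq_inCount (streq_norm P) a]
  | out b P ih =>
      simp only [ntop_out, Multiset.map_singleton, Multiset.sum_singleton, inCount]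
      rw [← streq_inCount (streq_norm P) a]
  | par P Q ih1 ih2 =>
      simp only [ntop_par, Multiset.map_add, Multiset.sum_add, inCount, ih1, ih2]

lemma outCount_ntop (a : ℕ) (P : Proc) :
    outCount a P = ((ntop P).map (outCount a)).sum := by
  induction P with
  | nil => rfl
  | inp b P ih =>
      simp only [ntop_inp, Multiset.map_singleton, Multiset.sum_singleton, outCount]
      rw [← streq_outCount (streq_norm P) a]
  | out b P ih =>
      simp only [ntop_out, Multiset.map_singleton, Multiset.sum_singleton, outCount]
      rw [← streq_outCount (streq_norm P) a]
  | par P Q ih1 ih2 =>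
      simp only [ntop_par, Multiset.map_add, Multiset.sum_add, outCount, ih1, ih2]

lemma sum_map_le {m n : Multiset Proc} (f : Proc → ℕ) (h : m ≤ n) :
    (m.map f).sum ≤ (n.map f).sum := by
  obtain ⟨k, rfl⟩ := Multiset.le_iff_exists_add.mp h
  rw [Multiset.map_add, Multiset.sum_add]
  omega

lemma ntop_le_fill (E : ECtx) (Q : Proc) : ntop Q ≤ ntop (E.fill Q) := by
  induction E with
  | hole => exact le_rfl
  | parL P E ih =>
      show ntop Q ≤ ntop (par P (E.fill Q))
      rw [ntop_par]
      exact ih.trans (Multiset.le_add_left _ _)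
  | parR E P ih =>
      show ntop Q ≤ ntop (par (E.fill Q) P)
      rw [ntop_par]
      exact ih.trans (Multiset.le_add_right _ _)

lemma le_add_singleton_of_not_mem {Q M : Multiset Proc} {u v : Proc}
    (h : Q ≤ M + ({u} + {v})) (hv : v ∉ Q) (huv : u ≠ v) : Q ≤ M + {u} := by
  rw [Multiset.le_iff_count] at h ⊢
  intro z
  have hz := h z
  by_cases hzv : z = v
  · subst hzv
    simp [Multiset.count_eq_zero.mpr hv]
  · by_cases hzu : z = u <;>
      simp [Multiset.count_add, Multiset.count_singleton, hzu, hzv, huv] at hz ⊢ <;> omega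

lemma le_of_le_add_not_mem {Q M : Multiset Proc} {u v : Proc}
    (h : Q ≤ M + ({u} + {v})) (hu : u ∉ Q) (hv : v ∉ Q) : Q ≤ M := by
  rw [Multiset.le_iff_count] at h ⊢
  intro z
  have hz := h z
  by_cases hzu : z = u
  · subst hzu
    simp [Multiset.count_eq_zero.mpr hu]
  · by_cases hzv : z = v
    · subst hzv
      simp [Multiset.count_eq_zero.mpr hv]
    · simpa [Multiset.count_add, Multiset.count_singleton, hzu, hzv] using hz

lemma invariant_step {Q S S' : Proc}
    (hdl : Deadlock Q) (htc : TopComplete Q)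
    (hg : Good S) (hle : ntop Q ≤ ntop S) (h : Red S S') :
    ntop Q ≤ ntop S' := by
  obtain ⟨b, T, P1, P2, h1, h2⟩ := red_inv h
  have hS : ntop S = ntop T + ({inp b (pnorm P1)} + {out b (pnorm P2)}) := by
    rw [streq_ntop h1]; simp
  have hS' : ntop S' = ntop T + (ntop P1 + ntop P2) := by
    rw [streq_ntop h2]; simp
  have hnored : ¬ ∃ R, Red Q R := hdl.1
  have cS_out : outCount b T + outCount b P1 + outCount b P2 = 0 := by
    have e := streq_outCount h1 b
    have g := (hg b).2.1
    simp [outCount] at e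
    omega
  have cS_in : inCount b T + inCount b P1 + inCount b P2 = 0 := by
    have e := streq_inCount h1 b
    have g := (hg b).1
    simp [inCount] at e
    omega
  have hxQ : inp b (pnorm P1) ∉ ntop Q := by
    intro hxQ
    have htb : (true, b) ∈ hd Q := by
      rw [hd_eq_map]
      exact Multiset.mem_map.mpr ⟨_, hxQ, rfl⟩
    have hfb : (false, b) ∉ hd Q := fun hf => hnored (sync_red htb hf)
    have hoQ : 0 < outCount b Q := cout_iff.mp ((htc b).1 (inPred_iff.mpr htb))
    by_cases hyQ : out b (pnorm P2) ∈ ntop Q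
    · exact hfb (by rw [hd_eq_map]; exact Multiset.mem_map.mpr ⟨_, hyQ, rfl⟩)
    · have hle2 : ntop Q ≤ ntop T + {inp b (pnorm P1)} :=
        le_add_singleton_of_not_mem (hS ▸ hle) hyQ (by simp)
      have h5 := sum_map_le (outCount b) hle2
      rw [← outCount_ntop] at h5
      rw [Multiset.map_add, Multiset.sum_add, Multiset.map_singleton,
        Multiset.sum_singleton, ← outCount_ntop] at h5
      have h6 : outCount b (inp b (pnorm P1)) = outCount b P1 := by
        simp only [outCount]
        exact (streq_outCount (streq_norm P1) b).symm
      omega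
  have hyQ : out b (pnorm P2) ∉ ntop Q := by
    intro hyQ
    have hfb : (false, b) ∈ hd Q := by
      rw [hd_eq_map]; exact Multiset.mem_map.mpr ⟨_, hyQ, rfl⟩
    have htb : (true, b) ∉ hd Q := fun ht => hnored (sync_red ht hfb)
    have hiQ : 0 < inCount b Q := cin_iff.mp ((htc b).2 (outPred_iff.mpr hfb))
    have hle2 : ntop Q ≤ ntop T + {out b (pnorm P2)} := by
      refine le_add_singleton_of_not_mem ?_ hxQ (by simp)
      have h7 := hS ▸ hle
      rwa [show ({inp b (pnorm P1)} + {out b (pnorm P2)} : Multiset Proc) =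
        {out b (pnorm P2)} + {inp b (pnorm P1)} from add_comm _ _] at h7
    have h5 := sum_map_le (inCount b) hle2
    rw [← inCount_ntop] at h5
    rw [Multiset.map_add, Multiset.sum_add, Multiset.map_singleton,
      Multiset.sum_singleton, ← inCount_ntop] at h5
    have h6 : inCount b (out b (pnorm P2)) = inCount b P2 := by
      simp only [inCount]
      exact (streq_inCount (streq_norm P2) b).symm
    omega
  have hfinal : ntop Q ≤ ntop T := le_of_le_add_not_mem (hS ▸ hle) hxQ hyQ
  rw [hS']
  exact hfinal.trans (Multiset.le_add_right _ _)

lemma no_partner {Q : Proc} (hdl : Deadlock Q) (htc : TopComplete Q)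
    {a : ℕ} (hm : (true, a) ∈ hd Q)
    {R : Proc} (hgR : Good R) (hleR : ntop Q ≤ ntop R) :
    (false, a) ∉ hd R := by
  intro hf
  have hfa : (false, a) ∉ hd Q := fun h => hdl.1 (sync_red hm h)
  have hoQ : 0 < outCount a Q := cout_iff.mp ((htc a).1 (inPred_iff.mpr hm))
  obtain ⟨rest, hrest⟩ := Multiset.le_iff_exists_add.mp hleR
  rw [hd_eq_map, hrest, Multiset.map_add, Multiset.mem_add] at hf
  rcases hf with hf | hf
  · exact hfa (by rwa [hd_eq_map])
  · obtain ⟨X, hX, hXh⟩ := Multiset.mem_map.mp hf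
    have hXm : X ∈ ntop R := by
      rw [hrest]; exact Multiset.mem_add.mpr (Or.inr hX)
    obtain ⟨-, hsh⟩ := mem_ntop hXm
    have hXout : 0 < outCount a X := by
      rcases hsh with ⟨c, Y, rfl⟩ | ⟨c, Y, rfl⟩
      · simp [hdOf] at hXh
      · have hac : a = c := by simpa [hdOf] using hXh.symm
        subst hac
        simp [outCount]
    have hsum : outCount a R = outCount a Q + (rest.map (outCount a)).sum := by
      rw [outCount_ntop, hrest, Multiset.map_add, Multiset.sum_add, ← outCount_ntop]
    have hX1 : outCount a X ≤ (rest.map (outCount a)).sum :=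
      Multiset.single_le_sum (fun x _ => Nat.zero_le x) _ (Multiset.mem_map_of_mem _ hX)
    have hga := (hgR a).2.1
    omega

lemma no_partner' {Q : Proc} (hdl : Deadlock Q) (htc : TopComplete Q)
    {a : ℕ} (hm : (false, a) ∈ hd Q)
    {R : Proc} (hgR : Good R) (hleR : ntop Q ≤ ntop R) :
    (true, a) ∉ hd R := by
  intro hf
  have hfa : (true, a) ∉ hd Q := fun h => hdl.1 (sync_red h hm)
  have hiQ : 0 < inCount a Q := cin_iff.mp ((htc a).2 (outPred_iff.mpr hm))
  obtain ⟨rest, hrest⟩ := Multiset.le_iff_exists_add.mp hleR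
  rw [hd_eq_map, hrest, Multiset.map_add, Multiset.mem_add] at hf
  rcases hf with hf | hf
  · exact hfa (by rwa [hd_eq_map])
  · obtain ⟨X, hX, hXh⟩ := Multiset.mem_map.mp hf
    have hXm : X ∈ ntop R := by
      rw [hrest]; exact Multiset.mem_add.mpr (Or.inr hX)
    obtain ⟨-, hsh⟩ := mem_ntop hXm
    have hXin : 0 < inCount a X := by
      rcases hsh with ⟨c, Y, rfl⟩ | ⟨c, Y, rfl⟩
      · have hac : a = c := by simpa [hdOf] using hXh.symm
        subst hac
        simp [inCount]
      · simp [hdOf] at hXh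
    have hsum : inCount a R = inCount a Q + (rest.map (inCount a)).sum := by
      rw [inCount_ntop, hrest, Multiset.map_add, Multiset.sum_add, ← inCount_ntop]
    have hX1 : inCount a X ≤ (rest.map (inCount a)).sum :=
      Multiset.single_le_sum (fun x _ => Nat.zero_le x) _ (Multiset.mem_map_of_mem _ hX)
    have hga := (hgR a).1
    omega

lemma hd_mono {Q R : Proc} (h : ntop Q ≤ ntop R) {x : Bool × ℕ} (hx : x ∈ hd Q) :
    x ∈ hd R := by
  rw [hd_eq_map] at hx ⊢
  exact Multiset.mem_of_le (Multiset.map_le_map h) hx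

lemma reduceToNF {Q0 : Proc} (pol : Bool) (a : ℕ)
    (hns : ∀ R, Reds Q0 R → ¬ SyncPred a R) :
    ∀ n S, psize S ≤ n → Reds Q0 S → (pol, a) ∈ hd S →
    ∃ N, Reds S N ∧ (¬ ∃ R, Red N R) ∧ (pol, a) ∈ hd N := by
  intro n
  induction n with
  | zero =>
      intro S hsz hr hm
      by_cases hstep : ∃ S', Red S S'
      · obtain ⟨S', hS'⟩ := hstep
        have := red_psize hS'
        omega
      · exact ⟨S, Relation.ReflTransGen.refl, hstep, hm⟩
  | succ n ih =>
      intro S hsz hr hm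
      by_cases hstep : ∃ S', Red S S'
      · obtain ⟨S', hS'⟩ := hstep
        rcases red_hd hS' pol a hm with ⟨h1, h2⟩ | hm'
        · exact absurd ⟨inPred_iff.mpr h1, outPred_iff.mpr h2⟩ (hns S hr)
        · have := red_psize hS'
          obtain ⟨N, n1, n2, n3⟩ := ih S' (by omega) (hr.tail hS') hm'
          exact ⟨N, Relation.ReflTransGen.head hS' n1, n2, n3⟩
      · exact ⟨S, Relation.ReflTransGen.refl, hstep, hm⟩

end PSLAux

/-- PSL = CMP \ LF. -/
theorem psl_eq_cmp_minus_lf {P : Proc} (hlin : Linear P) (hc : Complete P) :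
    ¬ LockFree P ↔
      ∃ (E : ECtx) (Q : Proc), Reds P (E.fill Q) ∧ Deadlock Q ∧ TopComplete Q := by
  have hgood : Good P := fun a =>
    ⟨(hlin a).1, (hlin a).2, by rw [← cin_iff, ← cout_iff]; exact hc a⟩
  constructor
  · intro hnl
    rw [LockFree] at hnl
    push_neg at hnl
    obtain ⟨Q0, a, hr0, hw, hns⟩ := hnl
    obtain ⟨pol, hpm⟩ : ∃ pol, (pol, a) ∈ hd Q0 := by
      rcases hw with ⟨hin, -⟩ | ⟨hout, -⟩
      · exact ⟨true, inPred_iff.mp hin⟩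
      · exact ⟨false, outPred_iff.mp hout⟩
    obtain ⟨N, hrN, hnf, hmN⟩ :=
      reduceToNF pol a hns (psize Q0) Q0 le_rfl Relation.ReflTransGen.refl hpm
    refine ⟨ECtx.hole, N, hr0.trans hrN, ⟨hnf, ?_⟩, ?_⟩
    · intro hnil
      have h0 : hd N = 0 := by rw [streq_hd hnil]; rfl
      rw [h0] at hmN
      simp at hmN
    · exact good_topComplete (good_reds hrN (good_reds hr0 hgood))
  · rintro ⟨E, Q, hred, hdl, htc⟩ hlf
    have hgS0 : Good (E.fill Q) := good_reds hred hgood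
    have hle0 : ntop Q ≤ ntop (E.fill Q) := ntop_le_fill E Q
    have hinv : ∀ R, Reds (E.fill Q) R → Good R ∧ ntop Q ≤ ntop R := by
      intro R hR
      induction hR with
      | refl => exact ⟨hgS0, hle0⟩
      | tail _ h2 ih => exact ⟨good_red h2 ih.1, invariant_step hdl htc ih.1 ih.2 h2⟩
    have hQne : hd Q ≠ 0 := fun h => hdl.2 (hd_zero h)
    obtain ⟨⟨pol, a⟩, hpa⟩ := Multiset.exists_mem_of_ne_zero hQne
    cases pol with
    | true =>
        have hwait : WaitPred a (E.fill Q) :=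
          Or.inl ⟨inPred_iff.mpr (hd_mono hle0 hpa),
            fun ho => no_partner hdl htc hpa hgS0 hle0 (outPred_iff.mp ho)⟩
        obtain ⟨R, hRr, hsync⟩ := hlf (E.fill Q) a hred hwait
        obtain ⟨hgR, hleR⟩ := hinv R hRr
        exact no_partner hdl htc hpa hgR hleR (outPred_iff.mp hsync.2)
    | false =>
        have hwait : WaitPred a (E.fill Q) :=
          Or.inr ⟨outPred_iff.mpr (hd_mono hle0 hpa),
            fun hi => no_partner' hdl htc hpa hgS0 hle0 (inPred_iff.mp hi)⟩
        obtain ⟨R, hRr, hsync⟩ := hlf (E.fill Q) a hred hwait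
        obtain ⟨hgR, hleR⟩ := hinv R hRr
        exact no_partner' hdl htc hpa hgR hleR (inPred_iff.mp hsync.1)
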